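/- Stability of multi-parameter Tikhonov regularisation: if y^(l) → y^δ in σ, F^(l) → F^δ in the d_{K,L}-sense with all F^(l), F^δ ∈ F(τ), α^(l) → α in ℝⁿ≥0 with α ≠ 0, and x^(l) minimises T(·; α^(l), y^(l), F^(l)), then {x^(l)} has a subsequence converging in τ to a minimiser of T(·; α, y^δ, F^δ). -/

import Mathlib

open Filter Topology
open scoped ENNReal

/-- Convergence of a sequence in `Y` with respect to the topology `σ` induced by the
pseudo-metrics `d^(z)(y,ỹ) = |S(z,y) − S(z,ỹ)|`: `y^(l) → p` iff `S(z, y^(l)) → S(z,p)`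
for every `z ∈ Y`. -/
def SigmaTendsto {Y : Type*} (S : Y → Y → ℝ) (y : ℕ → Y) (p : Y) : Prop :=
  ∀ z : Y, Tendsto (fun l => S z (y l)) atTop (nhds (S z p))

/-- Sequential compactness of a subset of `Y` with respect to the topology `σ`. -/
def SeqCompactSigma {Y : Type*} (S : Y → Y → ℝ) (L : Set Y) : Prop :=
  ∀ y : ℕ → Y, (∀ l, y l ∈ L) →
    ∃ p ∈ L, ∃ φ : ℕ → ℕ, StrictMono φ ∧ SigmaTendsto S (fun l => y (φ l)) p

/-- Sequential lower semi-continuity of `(x,y) ↦ S(F(x),y)` with respect to `τ × σ`. -/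
def SeqLSCop {X Y : Type*} [TopologicalSpace X] (S : Y → Y → ℝ) (F : X → Y) : Prop :=
  ∀ (x : ℕ → X) (x₀ : X) (y : ℕ → Y) (y₀ : Y),
    Tendsto x atTop (nhds x₀) → SigmaTendsto S y y₀ →
      S (F x₀) y₀ ≤ liminf (fun l => S (F (x l)) (y l)) atTop

/-- The pseudo-metric `d_{K,L}(F,G) = sup {|S(F(x),z) − S(G(x),z)| : x ∈ K, z ∈ L}`
(with values in `[0,∞]`). -/
noncomputable def dKL {X Y : Type*} (S : Y → Y → ℝ) (K : Set X) (L : Set Y)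
    (F G : X → Y) : ℝ≥0∞ :=
  ⨆ x ∈ K, ⨆ z ∈ L, ENNReal.ofReal |S (F x) z - S (G x) z|

/-- Convergence of operators `F^(l) → F` with respect to `τ`: `d_{K,L}(F^(l),F) → 0`
for every sequentially `τ`-compact `K ⊆ X` and sequentially `σ`-compact `L ⊆ Y`. -/
def OpTendsto {X Y : Type*} [TopologicalSpace X] (S : Y → Y → ℝ)
    (F' : ℕ → X → Y) (F : X → Y) : Prop :=
  ∀ (K : Set X) (L : Set Y), IsSeqCompact K → SeqCompactSigma S L →
    Tendsto (fun l => dKL S K L (F' l) F) atTop (nhds 0)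
/-- Sequential `τ`-coercivity: every sequence on which `R` is (finitely) bounded has a
`τ`-convergent subsequence. -/
def SeqCoercive {X : Type*} [TopologicalSpace X] (R : X → ℝ≥0∞) : Prop :=
  ∀ (u : ℕ → X) (c : ℝ≥0∞), c ≠ ⊤ → (∀ l, R (u l) ≤ c) →
    ∃ (x : X) (φ : ℕ → ℕ), StrictMono φ ∧ Tendsto (fun l => u (φ l)) atTop (nhds x)

/-- Sequential `τ`-lower semi-continuity of `R : X → [0,∞]`. -/
def SeqLSC {X : Type*} [TopologicalSpace X] (R : X → ℝ≥0∞) : Prop :=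
  ∀ (u : ℕ → X) (x : X), Tendsto u atTop (nhds x) →
    R x ≤ liminf (fun l => R (u l)) atTop

/-- The class `F(τ)`: `(x,y) ↦ S(F(x),y)` is sequentially `(τ×σ)`-lower semi-continuous and
the joint domain `D` of the regularisation terms is dense in the required sense. -/
def MemFtau {X Y : Type*} [TopologicalSpace X] {n : ℕ} (S : Y → Y → ℝ)
    (R : Fin n → X → ℝ≥0∞) (F : X → Y) : Prop :=
  SeqLSCop S F ∧
  ∀ (x : X) (y : Y), ∃ u : ℕ → X,
    (∀ l k, R k (u l) ≠ ⊤) ∧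
    Tendsto u atTop (nhds x) ∧
    (∀ k, Tendsto (fun l => R k (u l)) atTop (nhds (R k x))) ∧
    Tendsto (fun l => S (F (u l)) y) atTop (nhds (S (F x) y))

/-- The multi-parameter Tikhonov functional
`T(x; α, y, F) = S(F(x),y) + Σ_k α_k R_k(x)`, with the convention `α_k R_k(x) = 0` when
`α_k = 0` and `R_k(x) = ∞`. -/
noncomputable def Tik {X Y : Type*} {n : ℕ} (S : Y → Y → ℝ) (R : Fin n → X → ℝ≥0∞)
    (α : Fin n → ℝ) (y : Y) (F : X → Y) (x : X) : ℝ≥0∞ :=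
  ENNReal.ofReal (S (F x) y) + ∑ k, ENNReal.ofReal (α k) * R k x

/-! Pick `k₀` with `α k₀ > 0`. Comparing `x^(l)` with a point `x₀` of the joint domain, where
`T(x₀; α^(l), y^(l), F^(l)) → T(x₀; α, y^δ, F^δ) < ∞`, bounds `R_{k₀}(x^(l))`, so coercivity
yields a subsequence `x^(φ l) → x_α`. The sets `{x_α} ∪ {x^(φ l)}` and `{y^δ} ∪ {y^(l)}` are
sequentially compact, so `d_{K,L}(F^(l), F^δ) → 0` on them; with the lower semicontinuity of
`S(F^δ ·, ·)` and of the `R_k` this gives `T(x_α) ≤ liminf T_l(x^(φ l))`. Minimality gives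
`limsup T_l(x^(φ l)) ≤ T(w)` for every `w` in the joint domain, and the density condition in
`F(τ)` extends this to all `x`. -/

namespace ENNReal

variable {ι : Type*} {f : Filter ι}

theorem ofReal_le_liminf_ofReal {t : ι → ℝ} {a : ℝ} (ht : ∀ᶠ i in f, 0 ≤ t i)
    (h : a ≤ liminf t f) : ENNReal.ofReal a ≤ liminf (fun i => ENNReal.ofReal (t i)) f := by
  have hbdd : IsBoundedUnder (· ≥ ·) f t := ⟨0, ht⟩
  refine (le_liminf_iff (by isBoundedDefault) (by isBoundedDefault)).2 fun b hb => ?_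
  have hb' : b.toReal < a := (ENNReal.lt_ofReal_iff_toReal_lt hb.ne_top).1 hb
  filter_upwards [eventually_lt_of_lt_liminf (hb'.trans_le h) hbdd] with i hi
  exact (ENNReal.lt_ofReal_iff_toReal_lt hb.ne_top).2 hi

theorem le_liminf_add (u v : ι → ℝ≥0∞) : liminf u f + liminf v f ≤ liminf (u + v) f := by
  rw [liminf_eq, liminf_eq, sSup_eq_iSup, sSup_eq_iSup]
  refine biSup_add_biSup_le ⟨0, by simp⟩ ⟨0, by simp⟩ fun a ha b hb => ?_
  exact le_liminf_of_le (by isBoundedDefault) ((ha.and hb).mono fun i hi => add_le_add hi.1 hi.2)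

theorem sum_liminf_le_liminf_sum {κ : Type*} (s : Finset κ) (u : κ → ι → ℝ≥0∞) :
    ∑ k ∈ s, liminf (u k) f ≤ liminf (fun i => ∑ k ∈ s, u k i) f := by
  classical
  induction s using Finset.induction_on with
  | empty => simp
  | insert k s hk ih =>
    simp only [Finset.sum_insert hk]
    exact (add_le_add le_rfl ih).trans
      (le_liminf_add (u := u k) (v := fun i => ∑ j ∈ s, u j i))

end ENNReal

theorem isSeqCompact_insert_range_of_tendsto {X : Type*} [TopologicalSpace X] {v : ℕ → X}
    {p : X} (hv : Tendsto v atTop (𝓝 p)) : IsSeqCompact (insert p (Set.range v)) := by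
  intro u hu
  by_cases hrep : ∃ q, ∃ᶠ j in atTop, u j = q
  · obtain ⟨q, hq⟩ := hrep
    obtain ⟨j, rfl⟩ := hq.exists
    obtain ⟨φ, hφ, hφu⟩ := extraction_of_frequently_atTop hq
    refine ⟨u j, hu j, φ, hφ, ?_⟩
    simp only [Function.comp_def, hφu, tendsto_const_nhds]
  -- Otherwise `u` eventually avoids each `v i`, hence converges to `p` itself.
  push Not at hrep
  refine ⟨p, Set.mem_insert _ _, id, strictMono_id, tendsto_def.2 fun U hU => ?_⟩
  obtain ⟨N, hN⟩ := eventually_atTop.1 (hv hU)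
  filter_upwards [(eventually_all_finset (Finset.range N)).2 fun i _ => hrep (v i)] with j hj
  show u j ∈ U
  rcases hu j with hpj | ⟨i, hij⟩
  · exact hpj ▸ mem_of_mem_nhds hU
  · exact hij ▸ hN i (not_lt.1 fun hi => hj i (Finset.mem_range.2 hi) hij.symm)

/-- The topology `σ`: the pseudo-metrics `d^(z)` are those induced by the maps `y ↦ S(z, y)`. -/
abbrev sigmaTopology {Y : Type*} (S : Y → Y → ℝ) : TopologicalSpace Y :=
  TopologicalSpace.induced (fun y z => S z y) inferInstance

section Sigma

variable {Y : Type*} {S : Y → Y → ℝ}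

theorem sigmaTendsto_iff_tendsto {y : ℕ → Y} {p : Y} :
    SigmaTendsto S y p ↔ Tendsto y atTop (@nhds Y (sigmaTopology S) p) := by
  rw [sigmaTopology, nhds_induced, tendsto_comap_iff, tendsto_pi_nhds]
  rfl

theorem seqCompactSigma_iff_isSeqCompact {L : Set Y} :
    SeqCompactSigma S L ↔ @IsSeqCompact Y (sigmaTopology S) L := by
  simp only [SeqCompactSigma, IsSeqCompact, sigmaTendsto_iff_tendsto, Function.comp_def]

theorem SigmaTendsto.seqCompactSigma_insert_range {y : ℕ → Y} {p : Y}
    (hy : SigmaTendsto S y p) : SeqCompactSigma S (insert p (Set.range y)) :=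
  seqCompactSigma_iff_isSeqCompact.2 <|
    @isSeqCompact_insert_range_of_tendsto _ (sigmaTopology S) _ _
      (sigmaTendsto_iff_tendsto.1 hy)

theorem SigmaTendsto.comp_tendsto {y : ℕ → Y} {p : Y} (hy : SigmaTendsto S y p) {φ : ℕ → ℕ}
    (hφ : Tendsto φ atTop atTop) : SigmaTendsto S (fun l => y (φ l)) p :=
  fun z => (hy z).comp hφ

end Sigma

theorem ofReal_abs_sub_le_dKL {X Y : Type*} {S : Y → Y → ℝ} {K : Set X} {L : Set Y}
    {F G : X → Y} {x : X} {z : Y} (hx : x ∈ K) (hz : z ∈ L) :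
    ENNReal.ofReal |S (F x) z - S (G x) z| ≤ dKL S K L F G :=
  le_iSup₂_of_le x hx (le_iSup₂_of_le z hz le_rfl)

section Operator

variable {X Y : Type*} [TopologicalSpace X] {S : Y → Y → ℝ}

theorem OpTendsto.comp_tendsto {F' : ℕ → X → Y} {F : X → Y} (hop : OpTendsto S F' F)
    {φ : ℕ → ℕ} (hφ : Tendsto φ atTop atTop) : OpTendsto S (fun l => F' (φ l)) F :=
  fun K L hK hL => (hop K L hK hL).comp hφ

theorem OpTendsto.tendsto_ofReal_abs_sub {F' : ℕ → X → Y} {F : X → Y} (hop : OpTendsto S F' F)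
    {x : ℕ → X} {x₀ : X} (hx : Tendsto x atTop (𝓝 x₀)) {y : ℕ → Y} {y₀ : Y}
    (hy : SigmaTendsto S y y₀) :
    Tendsto (fun l => ENNReal.ofReal |S (F' l (x l)) (y l) - S (F (x l)) (y l)|) atTop (𝓝 0) :=
  tendsto_of_tendsto_of_tendsto_of_le_of_le tendsto_const_nhds
    (hop _ _ (isSeqCompact_insert_range_of_tendsto hx) hy.seqCompactSigma_insert_range)
    (fun _ => zero_le) fun l =>
      ofReal_abs_sub_le_dKL (Set.mem_insert_of_mem _ ⟨l, rfl⟩) (Set.mem_insert_of_mem _ ⟨l, rfl⟩)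

theorem OpTendsto.tendsto_apply {F' : ℕ → X → Y} {F : X → Y} (hop : OpTendsto S F' F)
    {y : ℕ → Y} {y₀ : Y} (hy : SigmaTendsto S y y₀) (w : X) :
    Tendsto (fun l => S (F' l w) (y l)) atTop (𝓝 (S (F w) y₀)) := by
  have hdiff : Tendsto (fun l => S (F' l w) (y l) - S (F w) (y l)) atTop (𝓝 0) := by
    have h := (ENNReal.tendsto_toReal ENNReal.zero_ne_top).comp
      (hop.tendsto_ofReal_abs_sub (tendsto_const_nhds (x := w)) hy)
    simp only [Function.comp_def, ENNReal.toReal_ofReal (abs_nonneg _),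
      ENNReal.toReal_zero] at h
    exact tendsto_zero_iff_abs_tendsto_zero _ |>.2 h
  simpa using hdiff.add (hy (F w))

end Operator

theorem SeqCoercive.exists_subseq_tendsto_of_eventually_le {X : Type*} [TopologicalSpace X]
    {R : X → ℝ≥0∞} (hR : SeqCoercive R) {u : ℕ → X} {c : ℝ≥0∞} (hc : c ≠ ⊤)
    (hu : ∀ᶠ l in atTop, R (u l) ≤ c) :
    ∃ (x : X) (φ : ℕ → ℕ), StrictMono φ ∧ Tendsto (fun l => u (φ l)) atTop (𝓝 x) := by
  obtain ⟨N, hN⟩ := eventually_atTop.1 hu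
  obtain ⟨x, ψ, hψ, hψx⟩ := hR (fun l => u (N + l)) c hc fun l => hN _ (Nat.le_add_right _ _)
  exact ⟨x, fun l => N + ψ l, fun a b hab => Nat.add_lt_add_left (hψ hab) N, hψx⟩

section Tikhonov

variable {X Y : Type*} [TopologicalSpace X] {n : ℕ} {S : Y → Y → ℝ} {R : Fin n → X → ℝ≥0∞}
  {F : X → Y} {F' : ℕ → X → Y} {α : Fin n → ℝ} {α' : ℕ → Fin n → ℝ} {y : ℕ → Y} {y₀ : Y}

omit [TopologicalSpace X] in
theorem tik_ne_top {y : Y} {x : X} (hx : ∀ k, R k x ≠ ⊤) :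
    Tik S R α y F x ≠ ⊤ :=
  ENNReal.add_ne_top.2 ⟨ENNReal.ofReal_ne_top,
    ENNReal.sum_ne_top.2 fun k _ => ENNReal.mul_ne_top ENNReal.ofReal_ne_top (hx k)⟩

omit [TopologicalSpace X] in
theorem regulariser_le_of_tik_le {y : Y} {x : X} {k : Fin n} {a : ℝ} (ha : 0 < a)
    (hak : a ≤ α k) {c : ℝ≥0∞} (h : Tik S R α y F x ≤ c) : R k x ≤ c / ENNReal.ofReal a := by
  rw [ENNReal.le_div_iff_mul_le (Or.inl (ENNReal.ofReal_pos.2 ha).ne')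
    (Or.inl ENNReal.ofReal_ne_top), mul_comm]
  calc ENNReal.ofReal a * R k x ≤ ENNReal.ofReal (α k) * R k x := by
        gcongr
    _ ≤ ∑ j, ENNReal.ofReal (α j) * R j x :=
        Finset.single_le_sum (f := fun j => ENNReal.ofReal (α j) * R j x)
          (fun _ _ => zero_le) (Finset.mem_univ k)
    _ ≤ Tik S R α y F x := le_add_self
    _ ≤ c := h

theorem tendsto_tik (hop : OpTendsto S F' F) (hy : SigmaTendsto S y y₀)
    (hα : ∀ k, Tendsto (fun l => α' l k) atTop (𝓝 (α k))) {w : X} (hw : ∀ k, R k w ≠ ⊤) :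
    Tendsto (fun l => Tik S R (α' l) (y l) (F' l) w) atTop (𝓝 (Tik S R α y₀ F w)) :=
  (ENNReal.tendsto_ofReal (hop.tendsto_apply hy w)).add <| tendsto_finsetSum _ fun k _ =>
    ENNReal.Tendsto.mul_const (ENNReal.tendsto_ofReal (hα k)) (Or.inr (hw k))

theorem SeqLSCop.ofReal_le_liminf_of_opTendsto (hF : SeqLSCop S F) (hS0 : ∀ y z, 0 ≤ S y z)
    (hop : OpTendsto S F' F) {x : ℕ → X} {x₀ : X} (hx : Tendsto x atTop (𝓝 x₀))
    (hy : SigmaTendsto S y y₀) :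
    ENNReal.ofReal (S (F x₀) y₀) ≤
      liminf (fun l => ENNReal.ofReal (S (F' l (x l)) (y l))) atTop := by
  have hS_le : ∀ l, ENNReal.ofReal (S (F (x l)) (y l)) ≤ ENNReal.ofReal (S (F' l (x l)) (y l)) +
      ENNReal.ofReal |S (F' l (x l)) (y l) - S (F (x l)) (y l)| := fun l => by
    refine (ENNReal.ofReal_le_ofReal ?_).trans ENNReal.ofReal_add_le
    linarith [neg_abs_le (S (F' l (x l)) (y l) - S (F (x l)) (y l))]
  calc ENNReal.ofReal (S (F x₀) y₀)
      ≤ liminf (fun l => ENNReal.ofReal (S (F (x l)) (y l))) atTop :=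
        ENNReal.ofReal_le_liminf_ofReal (.of_forall fun _ => hS0 _ _) (hF x x₀ y y₀ hx hy)
    _ ≤ liminf (fun l => ENNReal.ofReal (S (F' l (x l)) (y l)) +
          ENNReal.ofReal |S (F' l (x l)) (y l) - S (F (x l)) (y l)|) atTop :=
        liminf_le_liminf (.of_forall hS_le)
    _ = liminf (fun l => ENNReal.ofReal (S (F' l (x l)) (y l))) atTop :=
        ENNReal.liminf_add_of_right_tendsto_zero (hop.tendsto_ofReal_abs_sub hx hy) _

theorem sum_ofReal_mul_le_liminf (hR : ∀ k, SeqLSC (R k)) {x : ℕ → X} {x₀ : X}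
    (hx : Tendsto x atTop (𝓝 x₀)) (hα : ∀ k, Tendsto (fun l => α' l k) atTop (𝓝 (α k))) :
    ∑ k, ENNReal.ofReal (α k) * R k x₀ ≤
      liminf (fun l => ∑ k, ENNReal.ofReal (α' l k) * R k (x l)) atTop := by
  refine le_trans (Finset.sum_le_sum fun k _ => ?_) (ENNReal.sum_liminf_le_liminf_sum _ _)
  calc ENNReal.ofReal (α k) * R k x₀
      ≤ liminf (fun l => ENNReal.ofReal (α' l k)) atTop * liminf (fun l => R k (x l)) atTop := by
        rw [(ENNReal.tendsto_ofReal (hα k)).liminf_eq]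
        gcongr
        exact hR k x x₀ hx
    _ ≤ _ := ENNReal.le_liminf_mul

theorem tik_le_liminf_tik (hS0 : ∀ y z, 0 ≤ S y z) (hF : SeqLSCop S F)
    (hR : ∀ k, SeqLSC (R k)) (hop : OpTendsto S F' F) {x : ℕ → X} {x₀ : X}
    (hx : Tendsto x atTop (𝓝 x₀)) (hy : SigmaTendsto S y y₀)
    (hα : ∀ k, Tendsto (fun l => α' l k) atTop (𝓝 (α k))) :
    Tik S R α y₀ F x₀ ≤ liminf (fun l => Tik S R (α' l) (y l) (F' l) (x l)) atTop :=
  (add_le_add (hF.ofReal_le_liminf_of_opTendsto hS0 hop hx hy)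
    (sum_ofReal_mul_le_liminf hR hx hα)).trans (ENNReal.le_liminf_add _ _)

theorem MemFtau.le_tik_of_forall_dom (hF : MemFtau S R F) {a : ℝ≥0∞} {y : Y}
    (h : ∀ w, (∀ k, R k w ≠ ⊤) → a ≤ Tik S R α y F w) (x : X) : a ≤ Tik S R α y F x := by
  obtain ⟨u, hu_dom, -, hRu, hSu⟩ := hF.2 x y
  have hTu : Tendsto (fun m => Tik S R α y F (u m)) atTop (𝓝 (Tik S R α y F x)) :=
    (ENNReal.tendsto_ofReal hSu).add <| tendsto_finsetSum _ fun k _ =>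
      ENNReal.Tendsto.const_mul (hRu k) (Or.inr ENNReal.ofReal_ne_top)
  exact ge_of_tendsto' hTu fun m => h (u m) (hu_dom m)

end Tikhonov

theorem tikhonov_stability_general {X Y : Type*} [TopologicalSpace X] {n : ℕ}
    (S : Y → Y → ℝ) (hS0 : ∀ y z : Y, 0 ≤ S y z)
    (R : Fin n → X → ℝ≥0∞)
    (hcoer : ∀ k, SeqCoercive (R k)) (hlsc : ∀ k, SeqLSC (R k))
    (hD : ∃ x₀ : X, ∀ k, R k x₀ ≠ ⊤)
    (yδ : Y) (y' : ℕ → Y) (hy : SigmaTendsto S y' yδ)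
    (Fδ : X → Y) (F' : ℕ → X → Y)
    (hFδ : MemFtau S R Fδ)
    (hop : OpTendsto S F' Fδ)
    (α : Fin n → ℝ) (hα : ∀ k, 0 ≤ α k) (hαne : α ≠ 0)
    (α' : ℕ → Fin n → ℝ)
    (hαconv : ∀ k, Tendsto (fun l => α' l k) atTop (nhds (α k)))
    (x' : ℕ → X)
    (hmin : ∀ l x, Tik S R (α' l) (y' l) (F' l) (x' l) ≤ Tik S R (α' l) (y' l) (F' l) x) :
    ∃ (φ : ℕ → ℕ), StrictMono φ ∧ ∃ xα : X,
      Tendsto (fun l => x' (φ l)) atTop (nhds xα) ∧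
      ∀ x : X, Tik S R α yδ Fδ xα ≤ Tik S R α yδ Fδ x := by
  obtain ⟨x₀, hx₀⟩ := hD
  obtain ⟨k₀, hk₀⟩ : ∃ k, 0 < α k := by
    by_contra! h
    exact hαne (funext fun k => le_antisymm (h k) (hα k))
  have hT : ∀ w, (∀ k, R k w ≠ ⊤) → Tendsto (fun l => Tik S R (α' l) (y' l) (F' l) w) atTop
      (𝓝 (Tik S R α yδ Fδ w)) := fun w hw => tendsto_tik hop hy hαconv hw
  have hbound : ∀ᶠ l in atTop,
      R k₀ (x' l) ≤ (Tik S R α yδ Fδ x₀ + 1) / ENNReal.ofReal (α k₀ / 2) := by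
    filter_upwards [(hT x₀ hx₀).eventually (eventually_lt_nhds
        (ENNReal.lt_add_right (tik_ne_top hx₀) one_ne_zero)),
      (hαconv k₀).eventually (eventually_gt_nhds (half_lt_self hk₀))] with l hTl hαl
    exact regulariser_le_of_tik_le (half_pos hk₀) hαl.le ((hmin l x₀).trans hTl.le)
  obtain ⟨xα, φ, hφ, hxφ⟩ := (hcoer k₀).exists_subseq_tendsto_of_eventually_le
    (ENNReal.div_ne_top (ENNReal.add_ne_top.2 ⟨tik_ne_top hx₀, ENNReal.one_ne_top⟩)
      (ENNReal.ofReal_pos.2 (half_pos hk₀)).ne') hbound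
  have hφ' := hφ.tendsto_atTop
  refine ⟨φ, hφ, xα, hxφ, hFδ.le_tik_of_forall_dom fun w hw => ?_⟩
  calc Tik S R α yδ Fδ xα
      ≤ liminf (fun l => Tik S R (α' (φ l)) (y' (φ l)) (F' (φ l)) (x' (φ l))) atTop :=
        tik_le_liminf_tik hS0 hFδ.1 hlsc (hop.comp_tendsto hφ') hxφ (hy.comp_tendsto hφ')
          fun k => (hαconv k).comp hφ'
    _ ≤ limsup (fun l => Tik S R (α' (φ l)) (y' (φ l)) (F' (φ l)) (x' (φ l))) atTop :=
        liminf_le_limsup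
    _ ≤ limsup (fun l => Tik S R (α' (φ l)) (y' (φ l)) (F' (φ l)) w) atTop :=
        limsup_le_limsup (.of_forall fun l => hmin (φ l) w)
    _ = Tik S R α yδ Fδ w := ((hT w hw).comp hφ').limsup_eq

/-- stability: if `y^(l) → y^δ` in `σ`, `F^(l) → F^δ` in the `d_{K,L}`-sense
with all `F^(l), F^δ ∈ F(τ)`, `α^(l) → α` in `ℝⁿ_{≥0}` with `α ≠ 0`, and each `x^(l)`
minimises `T(·; α^(l), y^(l), F^(l))`, then `{x^(l)}` has a subsequence converging in `τ`
to a minimiser of `T(·; α, y^δ, F^δ)`. -/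
theorem tikhonov_stability {X Y : Type*} [TopologicalSpace X] {n : ℕ}
    (S : Y → Y → ℝ) (hS0 : ∀ y z : Y, 0 ≤ S y z) (hSdef : ∀ y z : Y, S y z = 0 ↔ y = z)
    (R : Fin n → X → ℝ≥0∞)
    (hcoer : ∀ k, SeqCoercive (R k)) (hlsc : ∀ k, SeqLSC (R k))
    (hD : ∃ x₀ : X, ∀ k, R k x₀ ≠ ⊤)
    (yδ : Y) (y' : ℕ → Y) (hy : SigmaTendsto S y' yδ)
    (Fδ : X → Y) (F' : ℕ → X → Y)
    (hFδ : MemFtau S R Fδ) (hF' : ∀ l, MemFtau S R (F' l))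
    (hop : OpTendsto S F' Fδ)
    (α : Fin n → ℝ) (hα : ∀ k, 0 ≤ α k) (hαne : α ≠ 0)
    (α' : ℕ → Fin n → ℝ) (hα' : ∀ l k, 0 ≤ α' l k) (hα'ne : ∀ l, α' l ≠ 0)
    (hαconv : ∀ k, Tendsto (fun l => α' l k) atTop (nhds (α k)))
    (x' : ℕ → X)
    (hmin : ∀ l x, Tik S R (α' l) (y' l) (F' l) (x' l) ≤ Tik S R (α' l) (y' l) (F' l) x) :
    ∃ (φ : ℕ → ℕ), StrictMono φ ∧ ∃ xα : X,
      Tendsto (fun l => x' (φ l)) atTop (nhds xα) ∧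
      ∀ x : X, Tik S R α yδ Fδ xα ≤ Tik S R α yδ Fδ x :=
  tikhonov_stability_general S hS0 R hcoer hlsc hD yδ y' hy Fδ F' hFδ hop α hα hαne α' hαconv x'
    hmin
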